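/- In Setup A, assume additionally that Σ_{k=1}^{n'} a_k/r_k ≥ 1/r_{n+1}. Let S, S' ⊆ {1,…,n} be subsets containing {1,…,n'}, with integer families t = (t_i)_{i∈S} and t' = (t'_i)_{i∈S'}. If U(S,t) is not contained in U(S',t'), then F(S,t) is not contained in F(S',t'), and the set difference F(S,t) ∖ F(S',t'), equipped with the subspace topology from ℝⁿ, is a contractible topological space. -/

import Mathlib

open scoped RealInnerProductSpace BigOperators

noncomputable section

/-- Euclidean space `ℝⁿ` with the standard inner product. -/
abbrev E (n : ℕ) : Type := EuclideanSpace ℝ (Fin n)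

/-- The index set `I' = {1,…,n'}` inside `{1,…,n}`. -/
def IprimeA (n n' : ℕ) : Finset (Fin n) := Finset.univ.filter fun i => i.val < n'

/-- `v_{n+1} := a₁ v₁ + ⋯ + a_{n'} v_{n'}`. -/
def vLast (n n' : ℕ) (a : Fin n → ℚ) (v : Fin n → E n) : E n :=
  ∑ i ∈ IprimeA n n', (a i : ℝ) • v i

/-- `U(S,t) := {x ∈ ℝⁿ : ⟨x, v_i⟩ > t_i/r_i for all i ∈ S}`. -/
def USet (n : ℕ) (v : Fin n → E n) (r : Fin n → ℤ) (S : Finset (Fin n))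
    (t : Fin n → ℤ) : Set (E n) :=
  {x | ∀ i ∈ S, ((t i : ℝ) / (r i : ℝ)) < ⟪x, v i⟫}

/-- `t_{n+1}(t) := ⌈r_{n+1} · Σ_{k=1}^{n'} a_k t_k / r_k⌉`. -/
def tLast (n n' : ℕ) (a : Fin n → ℚ) (r : Fin n → ℤ) (rl : ℤ) (t : Fin n → ℤ) : ℤ :=
  ⌈(rl : ℚ) * ∑ k ∈ IprimeA n n', a k * (t k : ℚ) / (r k : ℚ)⌉

/-- `F(S,t) := {x ∈ U(S,t) : ⟨x, v_{n+1}⟩ > t_{n+1}(t)/r_{n+1}}`. -/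
def FSetA (n n' : ℕ) (a : Fin n → ℚ) (v : Fin n → E n) (r : Fin n → ℤ) (rl : ℤ)
    (S : Finset (Fin n)) (t : Fin n → ℤ) : Set (E n) :=
  {x | x ∈ USet n v r S t ∧
    ((tLast n n' a r rl t : ℝ) / (rl : ℝ)) < ⟪x, vLast n n' a v⟫}

/-! Since the `v_i` are independent, a point can be given arbitrary coordinates `⟪p, v_j⟫`. Take
`⟪p, v_j⟫ = (t_j + ε)/r_j` for `j ∈ S` and `t'_j/r_j` otherwise, with `ε ∈ (0, 1]` chosen so that
`t_{n+1}(t)/r_{n+1} < ⟪p, v_{n+1}⟫ ≤ (t_{n+1}(t) + 1)/r_{n+1}`; such an `ε` exists because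
`Σ a_k/r_k ≥ 1/r_{n+1}`. Then `p ∈ F(S,t)`, and since all thresholds are integers divided by
`r_j` (resp. `r_{n+1}`), `p` violates every defining inequality of `F(S',t')` that some point of
`F(S,t)` violates. So for `q ∈ F(S,t) ∖ F(S',t')` the segment `[p, q]` stays in `F(S,t)` and in
the closed half-space where that inequality fails: the difference is star-shaped about `p`. A point
of `U(S,t) ∖ U(S',t')` shows that `p ∉ F(S',t')`. -/

theorem LinearIndependent.exists_inner_eq {ι F : Type*} [Finite ι] [NormedAddCommGroup F]
    [InnerProductSpace ℝ F] {v : ι → F} (hv : LinearIndependent ℝ v) (c : ι → ℝ) :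
    ∃ x : F, ∀ i, ⟪x, v i⟫ = c i := by
  let b := Module.Basis.span hv
  have : FiniteDimensional ℝ (Submodule.span ℝ (Set.range v)) := b.finiteDimensional_of_finite
  let φ := LinearMap.toContinuousLinearMap (b.constr ℝ c)
  refine ⟨(InnerProductSpace.toDual ℝ (Submodule.span ℝ (Set.range v))).symm φ, fun i => ?_⟩
  have hb : (b i : F) = v i := by simp [b, Module.Basis.span_apply]
  rw [← hb, ← Submodule.coe_inner, InnerProductSpace.toDual_symm_apply]
  simp [φ]

theorem StarConvex.diff {𝕜 F : Type*} [Semiring 𝕜] [PartialOrder 𝕜] [AddCommMonoid F]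
    [SMul 𝕜 F] {p : F} {A B : Set F} (hA : StarConvex 𝕜 p A)
    (hB : ∀ q ∈ A \ B, ∃ C, Convex 𝕜 C ∧ p ∈ C ∧ q ∈ C ∧ Disjoint C B) :
    StarConvex 𝕜 p (A \ B) := by
  rintro q ⟨hqA, hqB⟩ α β hα hβ hαβ
  obtain ⟨C, hC, hpC, hqC, hCB⟩ := hB q ⟨hqA, hqB⟩
  exact ⟨hA hqA hα hβ hαβ, hCB.notMem_of_mem_left (hC hpC hqC hα hβ hαβ)⟩

section InnerHalfSpace

variable {F : Type*} [NormedAddCommGroup F] [InnerProductSpace ℝ F]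

theorem isLinearMap_inner_left (w : F) : IsLinearMap ℝ fun x : F => ⟪x, w⟫ :=
  ⟨fun x y => inner_add_left x y w, fun c x => real_inner_smul_left x w c⟩

theorem convex_setOf_forall_lt_inner {ι : Type*} (S : Set ι) (c : ι → ℝ) (w : ι → F) :
    Convex ℝ {x : F | ∀ i ∈ S, c i < ⟪x, w i⟫} := by
  simp only [Set.ofPred_forall]
  exact convex_iInter₂ fun i _ => convex_halfSpace_gt (isLinearMap_inner_left (w i)) (c i)

end InnerHalfSpace

theorem convex_FSetA (n n' : ℕ) (a : Fin n → ℚ) (v : Fin n → E n) (r : Fin n → ℤ) (rl : ℤ)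
    (S : Finset (Fin n)) (t : Fin n → ℤ) : Convex ℝ (FSetA n n' a v r rl S t) :=
  (convex_setOf_forall_lt_inner (S : Set (Fin n)) _ v).inter
    (convex_halfSpace_gt (isLinearMap_inner_left _) _)

theorem add_div_le_div_of_div_lt {k k' r : ℤ} (hr : 0 < r) {ε : ℝ} (hε : ε ≤ 1)
    (h : (k : ℝ) / r < k' / r) : (k + ε) / r ≤ k' / r := by
  have hr' : (0 : ℝ) < r := by exact_mod_cast hr
  have hkk' : k < k' := by exact_mod_cast (div_lt_div_iff_of_pos_right hr').mp h
  have : (k : ℝ) + 1 ≤ k' := by exact_mod_cast hkk'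
  exact div_le_div_of_nonneg_right (by linarith) hr'.le

theorem le_ceil_mul_div {K : Type*} [Field K] [LinearOrder K] [IsStrictOrderedRing K]
    [FloorRing K] {ρ : K} (hρ : 0 < ρ) (x : K) : x ≤ ⌈ρ * x⌉ / ρ := by
  rw [le_div_iff₀ hρ, mul_comm]
  exact Int.le_ceil _

theorem ceil_mul_div_lt_add {K : Type*} [Field K] [LinearOrder K] [IsStrictOrderedRing K]
    [FloorRing K] {ρ : K} (hρ : 0 < ρ) (x : K) : ⌈ρ * x⌉ / ρ < x + 1 / ρ := by
  rw [div_lt_iff₀ hρ, add_mul, one_div_mul_cancel hρ.ne', mul_comm]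
  exact Int.ceil_lt_add_one _

theorem exists_pos_le_one_lt_add_mul_le {m σ d K : ℝ} (hd : 0 < d) (hm : m ≤ σ)
    (hσ : σ < m + d) (hK : d ≤ K) :
    ∃ ε, 0 < ε ∧ ε ≤ 1 ∧ σ < m + ε * K ∧ m + ε * K ≤ σ + d := by
  have hK0 : 0 < K := hd.trans_le hK
  have hε : min 1 ((σ + d - m) / K) * K = min K (σ + d - m) := by
    rw [min_mul_of_nonneg _ _ hK0.le, one_mul, div_mul_cancel₀ _ hK0.ne']
  refine ⟨min 1 ((σ + d - m) / K), lt_min one_pos (div_pos (by linarith) hK0), min_le_left _ _,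
    ?_, ?_⟩ <;> rw [hε]
  · exact lt_add_of_sub_left_lt (lt_min (by linarith) (by linarith))
  · linarith [min_le_right K (σ + d - m)]

theorem tLast_div_bounds (n n' : ℕ) (a : Fin n → ℚ) (r : Fin n → ℤ) {rl : ℤ} (hrl : 0 < rl)
    (t : Fin n → ℤ) :
    ∑ k ∈ IprimeA n n', (a k : ℝ) * (t k / r k) ≤ (tLast n n' a r rl t : ℝ) / rl ∧
      (tLast n n' a r rl t : ℝ) / rl < ∑ k ∈ IprimeA n n', (a k : ℝ) * (t k / r k) + 1 / rl := by
  have hrl' : (0 : ℚ) < rl := by exact_mod_cast hrl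
  have hcast : ((∑ k ∈ IprimeA n n', a k * t k / r k : ℚ) : ℝ) =
      ∑ k ∈ IprimeA n n', (a k : ℝ) * (t k / r k) := by
    push_cast
    simp only [mul_div_assoc]
  rw [← hcast]
  constructor
  · exact_mod_cast le_ceil_mul_div hrl' _
  · exact_mod_cast ceil_mul_div_lt_add hrl' _

section Apex

variable {n n' : ℕ} {v : Fin n → E n} {r : Fin n → ℤ} {S : Finset (Fin n)} {t t' : Fin n → ℤ}
  {ε : ℝ} {p : E n}

theorem mem_USet_of_inner_eq (hr : ∀ i, 0 < r i) (hε : 0 < ε)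
    (hpS : ∀ j ∈ S, ⟪p, v j⟫ = (t j + ε) / r j) : p ∈ USet n v r S t := fun j hj => by
  rw [hpS j hj]
  exact div_lt_div_of_pos_right (by linarith) (by exact_mod_cast hr j)

theorem inner_le_of_mem_USet_of_inner_le (hr : ∀ i, 0 < r i) (hε : ε ≤ 1)
    (hpS : ∀ j ∈ S, ⟪p, v j⟫ = (t j + ε) / r j) (hpS' : ∀ j ∉ S, ⟪p, v j⟫ = t' j / r j)
    {q : E n} (hq : q ∈ USet n v r S t) {j : Fin n} (hqj : ⟪q, v j⟫ ≤ t' j / r j) :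
    ⟪p, v j⟫ ≤ t' j / r j := by
  by_cases hj : j ∈ S
  · rw [hpS j hj]
    exact add_div_le_div_of_div_lt (hr j) hε ((hq j hj).trans_le hqj)
  · rw [hpS' j hj]

theorem inner_vLast_eq_of_inner_eq (a : Fin n → ℚ) (hS : IprimeA n n' ⊆ S)
    (hpS : ∀ j ∈ S, ⟪p, v j⟫ = (t j + ε) / r j) :
    ⟪p, vLast n n' a v⟫ = ∑ k ∈ IprimeA n n', (a k : ℝ) * (t k / r k) +
      ε * ∑ k ∈ IprimeA n n', (a k : ℝ) / r k := by
  rw [vLast, inner_sum, Finset.mul_sum, ← Finset.sum_add_distrib]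
  refine Finset.sum_congr rfl fun k hk => ?_
  rw [real_inner_smul_right, hpS k (hS hk)]
  ring

end Apex

theorem exists_apex {n n' : ℕ} {v : Fin n → E n} (hv : LinearIndependent ℝ v) (a : Fin n → ℚ)
    {r : Fin n → ℤ} (hr : ∀ i, 0 < r i) {rl : ℤ} (hrl : 0 < rl)
    (hsum : (1 : ℚ) / rl ≤ ∑ k ∈ IprimeA n n', a k / r k) {S : Finset (Fin n)}
    (hS : IprimeA n n' ⊆ S) (t t' : Fin n → ℤ) :
    ∃ p ∈ FSetA n n' a v r rl S t,
      (∀ q ∈ USet n v r S t, ∀ j, ⟪q, v j⟫ ≤ t' j / r j → ⟪p, v j⟫ ≤ t' j / r j) ∧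
      ∀ q ∈ FSetA n n' a v r rl S t, ⟪q, vLast n n' a v⟫ ≤ tLast n n' a r rl t' / rl →
        ⟪p, vLast n n' a v⟫ ≤ tLast n n' a r rl t' / rl := by
  obtain ⟨hm, hσ⟩ := tLast_div_bounds n n' a r hrl t
  have hK : (1 : ℝ) / rl ≤ ∑ k ∈ IprimeA n n', (a k : ℝ) / r k := by exact_mod_cast hsum
  obtain ⟨ε, hε0, hε1, hlow, hup⟩ :=
    exists_pos_le_one_lt_add_mul_le (one_div_pos.mpr (by exact_mod_cast hrl)) hm hσ hK
  obtain ⟨p, hp⟩ :=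
    hv.exists_inner_eq fun j => if j ∈ S then (t j + ε) / r j else (t' j : ℝ) / r j
  have hpS : ∀ j ∈ S, ⟪p, v j⟫ = (t j + ε) / r j := fun j hj => by rw [hp, if_pos hj]
  have hpS' : ∀ j ∉ S, ⟪p, v j⟫ = t' j / r j := fun j hj => by rw [hp, if_neg hj]
  have hpLast := inner_vLast_eq_of_inner_eq a hS hpS
  refine ⟨p, ⟨mem_USet_of_inner_eq hr hε0 hpS, hpLast ▸ hlow⟩,
    fun q hq j => inner_le_of_mem_USet_of_inner_le hr hε1 hpS hpS' hq, fun q hq hqle => ?_⟩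
  rw [hpLast]
  calc _ ≤ (tLast n n' a r rl t : ℝ) / rl + 1 / rl := hup
    _ = (tLast n n' a r rl t + 1) / rl := (add_div _ _ _).symm
    _ ≤ _ := add_div_le_div_of_div_lt hrl le_rfl (hq.2.trans_le hqle)

theorem stmt2 (n n' : ℕ)
    (v : Fin n → E n) (hv : LinearIndependent ℝ v)
    (a : Fin n → ℚ)
    (r : Fin n → ℤ) (hr : ∀ i, 0 < r i) (rl : ℤ) (hrl : 0 < rl)
    (hsum : (1 : ℚ) / (rl : ℚ) ≤ ∑ k ∈ IprimeA n n', a k / (r k : ℚ))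
    (S S' : Finset (Fin n)) (hS : IprimeA n n' ⊆ S)
    (t t' : Fin n → ℤ)
    (hU : ¬ USet n v r S t ⊆ USet n v r S' t') :
    ¬ FSetA n n' a v r rl S t ⊆ FSetA n n' a v r rl S' t' ∧
      ContractibleSpace ↥(FSetA n n' a v r rl S t \ FSetA n n' a v r rl S' t') := by
  obtain ⟨p, hpF, hpU, hpLast⟩ := exists_apex hv a hr hrl hsum hS t t'
  have hpF' : p ∉ FSetA n n' a v r rl S' t' := by
    obtain ⟨x, hxU, hxU'⟩ := Set.not_subset.mp hU
    simp only [USet, Set.mem_ofPred_eq, not_forall, not_lt] at hxU'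
    obtain ⟨j, hj, hxj⟩ := hxU'
    exact fun hp => (hp.1 j hj).not_ge (hpU x hxU j hxj)
  have hstar : StarConvex ℝ p (FSetA n n' a v r rl S t \ FSetA n n' a v r rl S' t') := by
    refine ((convex_FSetA n n' a v r rl S t).starConvex hpF).diff fun q ⟨hqF, hqF'⟩ => ?_
    simp only [FSetA, USet, Set.mem_ofPred_eq, not_and_or, not_forall, not_lt] at hqF'
    rcases hqF' with ⟨j, hj, hqj⟩ | hqLast
    · refine ⟨{x | ⟪x, v j⟫ ≤ t' j / r j}, convex_halfSpace_le (isLinearMap_inner_left _) _,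
        hpU q hqF.1 j hqj, hqj, Set.disjoint_left.mpr fun x hx hxF' => ?_⟩
      exact (hxF'.1 j hj).not_ge hx
    · refine ⟨{x | ⟪x, vLast n n' a v⟫ ≤ tLast n n' a r rl t' / rl},
        convex_halfSpace_le (isLinearMap_inner_left _) _, hpLast q hqF hqLast, hqLast,
        Set.disjoint_left.mpr fun x hx hxF' => hxF'.2.not_ge hx⟩
  exact ⟨fun h => hpF' (h hpF), hstar.contractibleSpace ⟨p, hpF, hpF'⟩⟩
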